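/- Under the same assumptions (f μ-strongly convex and L-smooth, 0 < t ≤ 1/L, inexact projected gradient iterates x^{k+1} = proj_X(x^k - ĝ^k) with ‖t∇f(x^k) - ĝ^k‖ ≤ Ω, and ε t μ > 4Ω), as long as ‖x^{j+1} - x*‖ ≥ ε/2 for all j ≤ k, the function values satisfy f(x^{k+1}) - f(x*) ≤ ((1 - 4Ω/ε)/(2t)) · ((1 - tμ)/(1 - 4Ω/ε))^{k+1} ‖x^0 - x*‖². -/

import Mathlib

/-!
Each inexact projected gradient step satisfies the perturbed descent inequality
`½‖x⁺ - x*‖² - ½(1 - tμ)‖x - x*‖² - Ω‖x⁺ - x*‖ ≤ t (f x* - f x⁺)`,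
obtained from the variational inequality of the projection, strong convexity at `x` and
the descent lemma between `x` and `x⁺`. While the iterates stay at distance at least `ε/2`
from `x*`, the error term `Ω‖x⁺ - x*‖` is at most `(2Ω/ε)‖x⁺ - x*‖²`, which turns the
inequality into a linear contraction of `‖x - x*‖²` with ratio `(1 - tμ)/(1 - 4Ω/ε)`, and
into the bound `f x⁺ - f x* ≤ (1 - tμ)/(2t) ‖x - x*‖²` for the last step.
-/

open scoped RealInnerProductSpace

/-- `p` is the Euclidean projection of `z` onto the set `X`. -/
def IsProj {n : ℕ} (X : Set (EuclideanSpace ℝ (Fin n))) (z p : EuclideanSpace ℝ (Fin n)) : Prop :=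
  p ∈ X ∧ ∀ y ∈ X, ‖p - z‖ ≤ ‖y - z‖

theorem IsProj.inner_sub_le_zero {n : ℕ} {X : Set (EuclideanSpace ℝ (Fin n))}
    {z p y : EuclideanSpace ℝ (Fin n)} (hp : IsProj X z p) (hX : Convex ℝ X) (hy : y ∈ X) :
    ⟪z - p, y - p⟫ ≤ 0 := by
  obtain ⟨hpX, hmin⟩ := hp
  have : Nonempty X := ⟨⟨p, hpX⟩⟩
  refine (norm_eq_iInf_iff_real_inner_le_zero hX hpX).mp (le_antisymm ?_ ?_) y hy
  · refine le_ciInf fun w => ?_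
    rw [norm_sub_rev z p, norm_sub_rev z]
    exact hmin w w.2
  · have hbdd : BddBelow (Set.range fun w : X => ‖z - w‖) :=
      ⟨0, by rintro _ ⟨w, rfl⟩; exact norm_nonneg _⟩
    exact ciInf_le hbdd ⟨p, hpX⟩

section InexactStep

variable {E : Type*} [NormedAddCommGroup E] [InnerProductSpace ℝ E]
  {f : E → ℝ} {g : E → E} {μ L t Ω : ℝ} {a b xs gh : E}

theorem inexact_projGrad_step_bound (ht : 0 ≤ t) (htL : t * L ≤ 1)
    (hsc : μ / 2 * ‖xs - a‖ ^ 2 ≤ f xs - f a - ⟪g a, xs - a⟫)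
    (hsm : f b - f a - ⟪g a, b - a⟫ ≤ L / 2 * ‖b - a‖ ^ 2)
    (hproj : ⟪a - gh - b, xs - b⟫ ≤ 0) :
    1 / 2 * ‖b - xs‖ ^ 2 - (1 - t * μ) / 2 * ‖a - xs‖ ^ 2 - ⟪t • g a - gh, b - xs⟫
      ≤ t * (f xs - f b) := by
  have hpolar : 2 * ⟪a - b, b - xs⟫ = ‖a - xs‖ ^ 2 - ‖a - b‖ ^ 2 - ‖b - xs‖ ^ 2 := by
    rw [← sub_add_sub_cancel a b xs, norm_add_sq_real]
    ring
  have hproj' : ⟪a - gh - b, xs - b⟫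
      = t * ⟪g a, b - xs⟫ - ⟪a - b, b - xs⟫ - ⟪t • g a - gh, b - xs⟫ := by
    rw [← neg_sub b xs, inner_neg_right,
      show a - gh - b = a - b - t • g a + (t • g a - gh) by abel,
      inner_add_left, inner_sub_left, real_inner_smul_left]
    ring
  have hgrad : ⟪g a, xs - a⟫ - ⟪g a, b - a⟫ = -⟪g a, b - xs⟫ := by
    rw [← inner_sub_right, ← inner_neg_right, sub_sub_sub_cancel_right, neg_sub]
  have hdescent : t * (μ / 2 * ‖a - xs‖ ^ 2 - ⟪g a, b - xs⟫ - L / 2 * ‖a - b‖ ^ 2)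
      ≤ t * (f xs - f b) := by
    rw [norm_sub_rev xs] at hsc
    rw [norm_sub_rev b] at hsm
    exact mul_le_mul_of_nonneg_left (by linarith) ht
  have hslack : 0 ≤ (1 - t * L) * ‖a - b‖ ^ 2 := mul_nonneg (by linarith) (sq_nonneg _)
  linarith

theorem inexact_projGrad_step_bound_norm (ht : 0 ≤ t) (htL : t * L ≤ 1)
    (hsc : μ / 2 * ‖xs - a‖ ^ 2 ≤ f xs - f a - ⟪g a, xs - a⟫)
    (hsm : f b - f a - ⟪g a, b - a⟫ ≤ L / 2 * ‖b - a‖ ^ 2)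
    (hproj : ⟪a - gh - b, xs - b⟫ ≤ 0) (herr : ‖t • g a - gh‖ ≤ Ω) :
    1 / 2 * ‖b - xs‖ ^ 2 - (1 - t * μ) / 2 * ‖a - xs‖ ^ 2 - Ω * ‖b - xs‖
      ≤ t * (f xs - f b) := by
  have hcs : ⟪t • g a - gh, b - xs⟫ ≤ Ω * ‖b - xs‖ :=
    (real_inner_le_norm _ _).trans (mul_le_mul_of_nonneg_right herr (norm_nonneg _))
  linarith [inexact_projGrad_step_bound ht htL hsc hsm hproj]

end InexactStep

section FarFromMinimizer

variable {E : Type*} [NormedAddCommGroup E] {f : E → ℝ} {μ t Ω ε : ℝ} {a b xs : E}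

theorem sq_contraction_of_step_bound (ht : 0 ≤ t) (hopt : f xs ≤ f b) (hΩ : 0 ≤ Ω)
    (hε : 0 < ε) (hfar : ε / 2 ≤ ‖b - xs‖)
    (hbound : 1 / 2 * ‖b - xs‖ ^ 2 - (1 - t * μ) / 2 * ‖a - xs‖ ^ 2 - Ω * ‖b - xs‖
      ≤ t * (f xs - f b)) :
    (1 - 4 * Ω / ε) * ‖b - xs‖ ^ 2 ≤ (1 - t * μ) * ‖a - xs‖ ^ 2 := by
  have hdescent : t * (f xs - f b) ≤ 0 := mul_nonpos_of_nonneg_of_nonpos ht (by linarith)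
  have herr : 2 * Ω * ‖b - xs‖ ≤ 4 * Ω / ε * ‖b - xs‖ ^ 2 := by
    have h : 2 * Ω = 4 * Ω / ε * (ε / 2) := by field_simp; ring
    rw [h, mul_assoc, sq]
    gcongr
  linarith

theorem value_bound_of_step_bound (ht : 0 < t) (hfar : 2 * Ω ≤ ‖b - xs‖)
    (hbound : 1 / 2 * ‖b - xs‖ ^ 2 - (1 - t * μ) / 2 * ‖a - xs‖ ^ 2 - Ω * ‖b - xs‖
      ≤ t * (f xs - f b)) :
    f b - f xs ≤ (1 - t * μ) / (2 * t) * ‖a - xs‖ ^ 2 := by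
  have herr : Ω * ‖b - xs‖ ≤ 1 / 2 * ‖b - xs‖ ^ 2 := by nlinarith [norm_nonneg (b - xs)]
  rw [div_mul_eq_mul_div, le_div_iff₀ (by positivity)]
  linarith

end FarFromMinimizer

theorem stmt9_general {n : ℕ} (f : EuclideanSpace ℝ (Fin n) → ℝ)
    (g : EuclideanSpace ℝ (Fin n) → EuclideanSpace ℝ (Fin n))
    (X : Set (EuclideanSpace ℝ (Fin n)))
    (hXcv : Convex ℝ X)
    (μ L t Ω ε : ℝ) (hL : 0 < L) (ht : 0 < t) (ht' : t ≤ 1 / L)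
    (hΩ : 0 ≤ Ω) (hε : 0 < ε) (hΩε : 4 * Ω < ε * t * μ)
    (hsc : ∀ x y, μ / 2 * ‖x - y‖ ^ 2 ≤ f x - f y - ⟪g y, x - y⟫)
    (hsm : ∀ x y, f x - f y - ⟪g y, x - y⟫ ≤ L / 2 * ‖x - y‖ ^ 2)
    (xs : EuclideanSpace ℝ (Fin n)) (hxsX : xs ∈ X) (hxs : ∀ y ∈ X, f xs ≤ f y)
    (x : ℕ → EuclideanSpace ℝ (Fin n))
    (gh : ℕ → EuclideanSpace ℝ (Fin n))
    (hgerr : ∀ k, ‖t • g (x k) - gh k‖ ≤ Ω)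
    (hstep : ∀ k, IsProj X (x k - gh k) (x (k + 1))) :
    ∀ k, (∀ j ≤ k, ε / 2 ≤ ‖x (j + 1) - xs‖) →
      f (x (k + 1)) - f xs ≤ (1 - 4 * Ω / ε) / (2 * t)
        * ((1 - t * μ) / (1 - 4 * Ω / ε)) ^ (k + 1) * ‖x 0 - xs‖ ^ 2 := by
  intro k hk
  have htL : t * L ≤ 1 := by rwa [le_div_iff₀ hL] at ht'
  have hbound m := inexact_projGrad_step_bound_norm ht.le htL (hsc xs (x m))
    (hsm (x (m + 1)) (x m)) ((hstep m).inner_sub_le_zero hXcv hxsX) (hgerr m)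
  have hμL : μ ≤ L := by
    have hr : 0 < ‖x (k + 1) - xs‖ := by linarith [hk k le_rfl]
    have := (hsc (x (k + 1)) xs).trans (hsm _ _)
    nlinarith [pow_pos hr 2]
  have htμ : 0 ≤ 1 - t * μ := by nlinarith
  have hΩε' : 4 * Ω < ε := by nlinarith
  have hρ : 0 < 1 - 4 * Ω / ε := by rwa [sub_pos, div_lt_one hε]
  have hdist : ‖x k - xs‖ ^ 2 ≤ ((1 - t * μ) / (1 - 4 * Ω / ε)) ^ k * ‖x 0 - xs‖ ^ 2 :=
    le_geom (u := fun m => ‖x m - xs‖ ^ 2) (by positivity) k fun m hm => by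
      rw [div_mul_eq_mul_div, le_div_iff₀' hρ]
      exact sq_contraction_of_step_bound ht.le (hxs _ (hstep m).1) hΩ hε (hk m hm.le) (hbound m)
  calc f (x (k + 1)) - f xs ≤ (1 - t * μ) / (2 * t) * ‖x k - xs‖ ^ 2 :=
        value_bound_of_step_bound ht (by linarith [hk k le_rfl]) (hbound k)
    _ ≤ (1 - t * μ) / (2 * t) * (((1 - t * μ) / (1 - 4 * Ω / ε)) ^ k * ‖x 0 - xs‖ ^ 2) := by
        gcongr
    _ = _ := by
        have hq : (1 - 4 * Ω / ε) * ((1 - t * μ) / (1 - 4 * Ω / ε)) = 1 - t * μ :=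
          mul_div_cancel₀ _ hρ.ne'
        linear_combination
          -(((1 - t * μ) / (1 - 4 * Ω / ε)) ^ k * ‖x 0 - xs‖ ^ 2 / (2 * t)) * hq

theorem stmt9 {n : ℕ} (f : EuclideanSpace ℝ (Fin n) → ℝ)
    (g : EuclideanSpace ℝ (Fin n) → EuclideanSpace ℝ (Fin n))
    (X : Set (EuclideanSpace ℝ (Fin n)))
    (hXne : X.Nonempty) (hXcl : IsClosed X) (hXcv : Convex ℝ X)
    (μ L t Ω ε : ℝ) (hμ : 0 < μ) (hL : 0 < L) (ht : 0 < t) (ht' : t ≤ 1 / L)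
    (hΩ : 0 ≤ Ω) (hε : 0 < ε) (hΩε : 4 * Ω < ε * t * μ)
    (hsc : ∀ x y, μ / 2 * ‖x - y‖ ^ 2 ≤ f x - f y - ⟪g y, x - y⟫)
    (hsm : ∀ x y, f x - f y - ⟪g y, x - y⟫ ≤ L / 2 * ‖x - y‖ ^ 2)
    (xs : EuclideanSpace ℝ (Fin n)) (hxsX : xs ∈ X) (hxs : ∀ y ∈ X, f xs ≤ f y)
    (x : ℕ → EuclideanSpace ℝ (Fin n)) (hx0 : x 0 ∈ X)
    (gh : ℕ → EuclideanSpace ℝ (Fin n))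
    (hgerr : ∀ k, ‖t • g (x k) - gh k‖ ≤ Ω)
    (hstep : ∀ k, IsProj X (x k - gh k) (x (k + 1))) :
    ∀ k, (∀ j ≤ k, ε / 2 ≤ ‖x (j + 1) - xs‖) →
      f (x (k + 1)) - f xs ≤ (1 - 4 * Ω / ε) / (2 * t)
        * ((1 - t * μ) / (1 - 4 * Ω / ε)) ^ (k + 1) * ‖x 0 - xs‖ ^ 2 :=
  stmt9_general f g X hXcv μ L t Ω ε hL ht ht' hΩ hε hΩε hsc hsm xs hxsX hxs x gh hgerr hstep
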